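/- arXiv:2508.20255 — 4 statements merged into one kernel-verified Lean document; each statement's English description precedes it below -/
import Mathlib

section
/- Let M be symmetric positive definite and K symmetric positive semidefinite in ℝ^{m×m}, and let Ā ∈ ℝ^{s×s} be a matrix all of whose eigenvalues have positive real part. Then for any Δt > 0, the matrix I_s ⊗ M + Δt² (Ā ⊗ K) is invertible. -/
/-!
Writing `M = Bᴴ B` with `B` invertible, the matrix is congruent to `I + Δt² (Ā ⊗ C)` with
`C = B⁻ᴴ K B⁻¹` positive semidefinite. Diagonalizing `C = U D Uᵀ` orthogonally makes it congruent
to `I + Δt² (Ā ⊗ D)`, which is block diagonal with blocks `I + Δt² d_k Ā`, `d_k ≥ 0`. These are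
invertible because `-1 / (Δt² d_k)` is a negative real number, hence not an eigenvalue of `Ā`.
-/

open Matrix
open scoped Kronecker

variable {l n : Type*} [Fintype l] [DecidableEq l] [Fintype n] [DecidableEq n]

lemma ofReal_mem_spectrum_map_ofReal {A : Matrix n n ℝ} {r : ℝ} (hr : r ∈ spectrum ℝ A) :
    (r : ℂ) ∈ spectrum ℂ (A.map (algebraMap ℝ ℂ)) := by
  rw [mem_spectrum_iff_isRoot_charpoly] at hr ⊢
  rw [charpoly_map]
  exact hr.map

lemma isUnit_one_add_smul_of_re_pos {A : Matrix n n ℝ}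
    (hA : ∀ μ ∈ spectrum ℂ (A.map (algebraMap ℝ ℂ)), 0 < μ.re) {c : ℝ} (hc : 0 ≤ c) :
    IsUnit (1 + c • A) := by
  rcases hc.eq_or_lt with rfl | hc
  · simp
  have hnotMem : -c⁻¹ ∉ spectrum ℝ A := fun h => by
    have := hA _ (ofReal_mem_spectrum_map_ofReal h)
    rw [Complex.ofReal_re] at this
    linarith [inv_pos.mpr hc]
  have hscale : 1 + c • A = (-c) • (algebraMap ℝ _ (-c⁻¹) - A) := by
    rw [Algebra.algebraMap_eq_smul_one, smul_sub, smul_smul]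
    field_simp
    simp [sub_eq_add_neg]
  rw [hscale]
  exact (spectrum.notMem_iff.mp hnotMem).smul (Units.mk0 (-c) (by linarith))

lemma one_kronecker_mul_one_add_smul_kronecker_mul {R : Type*} [CommRing R]
    (A : Matrix l l R) (P C Q : Matrix n n R) (t : R) :
    (1 ⊗ₖ P) * (1 + t • (A ⊗ₖ C)) * (1 ⊗ₖ Q) = 1 ⊗ₖ (P * Q) + t • (A ⊗ₖ (P * C * Q)) := by
  rw [mul_add, add_mul, mul_one, ← mul_kronecker_mul, mul_smul_comm, smul_mul_assoc,
    ← mul_kronecker_mul, ← mul_kronecker_mul, one_mul, mul_one, one_mul]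

omit [Fintype l] [Fintype n] in
lemma one_add_smul_kronecker_diagonal {R : Type*} [CommRing R]
    (A : Matrix l l R) (d : n → R) (t : R) :
    1 + t • (A ⊗ₖ diagonal d) = blockDiagonal fun k => 1 + (t * d k) • A := by
  ext ⟨i, k⟩ ⟨j, k'⟩
  by_cases h : k = k'
  · subst h
    simp [blockDiagonal_apply, one_apply, kroneckerMap_apply, mul_comm, mul_left_comm]
  · simp [blockDiagonal_apply, one_apply, kroneckerMap_apply, h]

section RightHalfPlane

variable {A : Matrix l l ℝ} (hA : ∀ μ ∈ spectrum ℂ (A.map (algebraMap ℝ ℂ)), 0 < μ.re)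
  {t : ℝ} (ht : 0 ≤ t)
include hA ht

lemma isUnit_one_add_smul_kronecker_diagonal {d : n → ℝ} (hd : ∀ k, 0 ≤ d k) :
    IsUnit (1 + t • (A ⊗ₖ diagonal d)) := by
  rw [one_add_smul_kronecker_diagonal, isUnit_iff_isUnit_det, det_blockDiagonal]
  exact IsUnit.prod_iff.mpr fun k _ => (isUnit_iff_isUnit_det _).mp <|
    isUnit_one_add_smul_of_re_pos hA (mul_nonneg ht (hd k))

lemma isUnit_one_add_smul_kronecker_of_posSemidef {C : Matrix n n ℝ} (hC : C.PosSemidef) :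
    IsUnit (1 + t • (A ⊗ₖ C)) := by
  have hCh := hC.1
  set U : Matrix n n ℝ := ↑hCh.eigenvectorUnitary
  set d : n → ℝ := RCLike.ofReal ∘ hCh.eigenvalues
  have hspec : C = U * diagonal d * star U := hCh.spectral_theorem
  have hU : U * star U = 1 := Unitary.mul_star_self_of_mem hCh.eigenvectorUnitary.2
  have hdiag : 1 + t • (A ⊗ₖ C) = (1 ⊗ₖ U) * (1 + t • (A ⊗ₖ diagonal d)) * (1 ⊗ₖ star U) := by
    rw [one_kronecker_mul_one_add_smul_kronecker_mul, hU, one_kronecker_one, ← hspec]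
  rw [hdiag]
  refine ((isUnit_one.kronecker ?_).mul (isUnit_one_add_smul_kronecker_diagonal hA ht ?_)).mul
    (isUnit_one.kronecker ?_)
  · exact Unitary.isUnit_coe
  · simpa [d] using hC.eigenvalues_nonneg
  · exact Unitary.isUnit_coe (U := star hCh.eigenvectorUnitary)

open scoped MatrixOrder Matrix.Norms.L2Operator in
lemma isUnit_one_kronecker_add_smul_kronecker {M K : Matrix n n ℝ} (hM : M.PosDef)
    (hK : K.PosSemidef) : IsUnit ((1 : Matrix l l ℝ) ⊗ₖ M + t • (A ⊗ₖ K)) := by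
  obtain ⟨B, hB, rfl⟩ :=
    CStarAlgebra.isStrictlyPositive_iff_eq_star_mul_self.mp hM.isStrictlyPositive
  obtain ⟨P, hPB⟩ := hB.exists_left_inv
  have hCongr : star B * (star P * K * P) * B = K := by
    simp only [mul_assoc, hPB, mul_one]
    rw [← mul_assoc, ← star_mul, hPB, star_one, one_mul]
  rw [← hCongr, ← one_kronecker_mul_one_add_smul_kronecker_mul]
  exact ((isUnit_one.kronecker hB.star).mul (isUnit_one_add_smul_kronecker_of_posSemidef hA ht
    (hK.conjTranspose_mul_mul_same P))).mul (isUnit_one.kronecker hB)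

end RightHalfPlane

theorem stmt9_general (s m : ℕ) (M K : Matrix (Fin m) (Fin m) ℝ)
    (Abar : Matrix (Fin s) (Fin s) ℝ)
    (hM : M.PosDef) (hK : K.PosSemidef)
    (hAbar : ∀ μ : ℂ, μ ∈ spectrum ℂ (Abar.map (algebraMap ℝ ℂ)) → 0 < μ.re)
    (Δt : ℝ) :
    IsUnit ((1 : Matrix (Fin s) (Fin s) ℝ) ⊗ₖ M + (Δt ^ 2) • (Abar ⊗ₖ K)) :=
  isUnit_one_kronecker_add_smul_kronecker hAbar (sq_nonneg Δt) hM hK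

/-- If `M` is SPD, `K` symmetric PSD, and all eigenvalues of `Ā` have positive real
part, then for any `Δt > 0` the matrix `I ⊗ M + Δt² (Ā ⊗ K)` is invertible. -/
theorem stmt9 (s m : ℕ) (M K : Matrix (Fin m) (Fin m) ℝ)
    (Abar : Matrix (Fin s) (Fin s) ℝ)
    (hM : M.PosDef) (hK : K.PosSemidef)
    (hAbar : ∀ μ : ℂ, μ ∈ spectrum ℂ (Abar.map (algebraMap ℝ ℂ)) → 0 < μ.re)
    (Δt : ℝ) (hΔt : 0 < Δt) :
    IsUnit ((1 : Matrix (Fin s) (Fin s) ℝ) ⊗ₖ M + (Δt ^ 2) • (Abar ⊗ₖ K)) :=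
  stmt9_general s m M K Abar hM hK hAbar Δt
end

section
/- Suppose M, K ∈ ℝ^{m×m} are symmetric, M positive definite and K positive semidefinite, and (A, b, c) is the 2-stage Gauss–Legendre tableau with derived Nyström coefficients Ā = A², b̄ = Aᵀb. If (κ⁽¹⁾, κ⁽²⁾) solve the stage equations M κ⁽ⁱ⁾ = −K(yⁿ + c_i Δt zⁿ + Δt²(ā_{i1}κ⁽¹⁾ + ā_{i2}κ⁽²⁾)) and we define y^{n+1} = yⁿ + Δt zⁿ + Δt²(b̄₁κ⁽¹⁾ + b̄₂κ⁽²⁾) and z^{n+1} = zⁿ + Δt(b₁κ⁽¹⁾ + b₂κ⁽²⁾), then the discrete energy E(y, z) = ½ zᵀMz + ½ yᵀKy satisfies E(y^{n+1}, z^{n+1}) = E(yⁿ, zⁿ). -/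
/-!
The Nyström scheme is the Gauss–Legendre Runge–Kutta method applied to the first-order system
`y' = z`, `M z' = -K y`, whose stage velocities are `Zᵢ = zⁿ + Δt ∑ⱼ aᵢⱼ κⱼ`. Twice the energy is
`B(u, u)` for the symmetric bilinear form `B((y, z), (y', z')) = zᵀ M z' + yᵀ K y'` on `u = (y, z)`,
and `B` vanishes on every stage paired with its slope, `B((Yᵢ, Zᵢ), (Zᵢ, κᵢ)) = 0`, because
`M κᵢ = -K Yᵢ`. For any Runge–Kutta method with `bᵢ bⱼ = bᵢ aᵢⱼ + bⱼ aⱼᵢ` this forces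
`B(uⁿ⁺¹, uⁿ⁺¹) = B(uⁿ, uⁿ)`: expanding the left side, the `Δt²` cross terms cancel exactly.
-/

open Matrix LinearMap.BilinForm

section SymplecticRungeKutta

variable {R V ι : Type*} [CommRing R] [AddCommGroup V] [Module R V] [Fintype ι]

theorem LinearMap.BilinForm.IsSymm.apply_rkStep_self {B : LinearMap.BilinForm R V} (hB : B.IsSymm)
    {a : Matrix ι ι R} {b : ι → R} (hsymp : ∀ i j, b i * b j = b i * a i j + b j * a j i)
    (h : R) (u : V) (k : ι → V) (hstage : ∀ i, B (u + h • ∑ j, a i j • k j) (k i) = 0) :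
    B (u + h • ∑ i, b i • k i) (u + h • ∑ i, b i • k i) = B u u := by
  set G : ι → ι → R := fun i j => B (k i) (k j)
  set s := ∑ i, b i • k i
  have hlin : ∀ i, B u (k i) = -h * ∑ j, a i j * G i j := by
    intro i
    have := hstage i
    simp only [add_left, smul_left, sum_left, hB.eq (k _) (k i)] at this
    linear_combination this
  have hus : B u s = -h * ∑ i, b i * ∑ j, a i j * G i j := by
    simp only [s, sum_right, smul_right, hlin, Finset.mul_sum, mul_left_comm (b _)]
  have hss : B s s = ∑ i, ∑ j, b i * b j * G i j := by
    simp only [s, G, sum_left, sum_right, smul_left, smul_right, Finset.mul_sum]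
    exact Finset.sum_congr rfl fun i _ => Finset.sum_congr rfl fun j _ => by rw [hB.eq]; ring
  have hquad : ∑ i, ∑ j, b i * b j * G i j = 2 * ∑ i, b i * ∑ j, a i j * G i j := by
    calc ∑ i, ∑ j, b i * b j * G i j
        = ∑ i, ∑ j, b i * a i j * G i j + ∑ i, ∑ j, b j * a j i * G i j := by
          simp only [← Finset.sum_add_distrib, ← add_mul, hsymp]
      _ = _ := by
          rw [Finset.sum_comm (f := fun i j => b j * a j i * G i j), two_mul]
          simp only [G, hB.eq (k _) (k _), Finset.mul_sum, mul_assoc]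
  calc B (u + h • s) (u + h • s) = B u u + 2 * h * B u s + h ^ 2 * B s s := by
        simp only [add_left, add_right, smul_left, smul_right, hB.eq s u]; ring
    _ = B u u := by rw [hus, hss, hquad]; ring

def rkStages (a : Matrix ι ι R) (h : R) (z : V) (κ : ι → V) (i : ι) : V :=
  z + h • ∑ j, a i j • κ j

theorem smul_sum_smul_rkStages (a : Matrix ι ι R) (w : ι → R) (h : R) (z : V) (κ : ι → V) :
    h • ∑ j, w j • rkStages a h z κ j = ((∑ j, w j) * h) • z + h ^ 2 • ∑ l, (w ᵥ* a) l • κ l := by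
  simp only [rkStages, smul_add, Finset.sum_add_distrib, Finset.smul_sum, smul_smul, vecMul,
    dotProduct, Finset.sum_smul]
  rw [Finset.sum_comm (γ := ι)]
  congr 1
  · simp only [Finset.sum_mul, Finset.sum_smul, mul_comm h]
  · exact Finset.sum_congr rfl fun _ _ => Finset.sum_congr rfl fun _ _ => by ring_nf

end SymplecticRungeKutta

section LinearWaveEnergy

variable {R n : Type*} [CommRing R] [Fintype n]

theorem Matrix.IsSymm.dotProduct_mulVec_comm {M : Matrix n n R} (hM : M.IsSymm) (x y : n → R) :
    x ⬝ᵥ M *ᵥ y = y ⬝ᵥ M *ᵥ x := by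
  rw [dotProduct_mulVec, ← mulVec_transpose, hM.eq, dotProduct_comm]

def energyForm (M K : Matrix n n R) : LinearMap.BilinForm R ((n → R) × (n → R)) :=
  LinearMap.mk₂ R (fun p q => p.2 ⬝ᵥ M *ᵥ q.2 + p.1 ⬝ᵥ K *ᵥ q.1)
    (fun _ _ _ => by simp only [Prod.fst_add, Prod.snd_add, add_dotProduct]; ring)
    (fun _ _ _ => by simp only [Prod.smul_fst, Prod.smul_snd, smul_dotProduct, smul_add])
    (fun _ _ _ => by simp only [Prod.fst_add, Prod.snd_add, mulVec_add, dotProduct_add]; ring)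
    (fun _ _ _ => by simp only [Prod.smul_fst, Prod.smul_snd, mulVec_smul, dotProduct_smul, smul_add])

theorem energyForm_apply (M K : Matrix n n R) (p q : (n → R) × (n → R)) :
    energyForm M K p q = p.2 ⬝ᵥ M *ᵥ q.2 + p.1 ⬝ᵥ K *ᵥ q.1 :=
  rfl

theorem isSymm_energyForm {M K : Matrix n n R} (hM : M.IsSymm) (hK : K.IsSymm) :
    (energyForm M K).IsSymm :=
  ⟨fun p q => by rw [energyForm_apply, energyForm_apply, hM.dotProduct_mulVec_comm,
    hK.dotProduct_mulVec_comm]⟩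

theorem energyForm_stage_eq_zero {M K : Matrix n n R} (hK : K.IsSymm) {y z κ : n → R}
    (hκ : M *ᵥ κ = -(K *ᵥ y)) : energyForm M K (y, z) (z, κ) = 0 := by
  rw [energyForm_apply, hκ, dotProduct_neg, hK.dotProduct_mulVec_comm, neg_add_cancel]

end LinearWaveEnergy

section NystromForm

variable {R ι n : Type*} [CommRing R] [Fintype ι] [Fintype n]

theorem Prod.mk_add_smul_sum_smul_mk {α β : Type*} [AddCommGroup α] [Module R α] [AddCommGroup β]
    [Module R β] (u : α) (v : β) (h : R) (w : ι → R) (p : ι → α) (q : ι → β) :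
    (u, v) + h • ∑ j, w j • (p j, q j) = (u + h • ∑ j, w j • p j, v + h • ∑ j, w j • q j) := by
  ext <;> simp [Prod.fst_sum, Prod.snd_sum]

theorem energyForm_rknStep_self {M K : Matrix n n R} (hM : M.IsSymm) (hK : K.IsSymm)
    {a : Matrix ι ι R} {b c : ι → R} (hsymp : ∀ i j, b i * b j = b i * a i j + b j * a j i)
    (hc : ∀ i, ∑ j, a i j = c i) (hb : ∑ i, b i = 1) (h : R) (y z : n → R) (κ : ι → n → R)
    (hstage : ∀ i, M *ᵥ κ i = -(K *ᵥ (y + (c i * h) • z + h ^ 2 • ∑ j, (a * a) i j • κ j)))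
    (y' z' : n → R) (hy' : y' = y + h • z + h ^ 2 • ∑ i, (aᵀ *ᵥ b) i • κ i)
    (hz' : z' = z + h • ∑ i, b i • κ i) :
    energyForm M K (y', z') (y', z') = energyForm M K (y, z) (y, z) := by
  have hnew : (y', z') = (y, z) + h • ∑ i, b i • (rkStages a h z κ i, κ i) := by
    rw [Prod.mk_add_smul_sum_smul_mk, smul_sum_smul_rkStages, hb, one_mul, hy', hz',
      mulVec_transpose, add_assoc]
  rw [hnew]
  refine (isSymm_energyForm hM hK).apply_rkStep_self hsymp h (y, z) _ fun i => ?_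
  rw [Prod.mk_add_smul_sum_smul_mk, smul_sum_smul_rkStages, hc, ← mul_apply_eq_vecMul, ← add_assoc]
  exact energyForm_stage_eq_zero hK (hstage i)

end NystromForm

section GaussLegendre

noncomputable def gaussLegendre2A : Matrix (Fin 2) (Fin 2) ℝ :=
  of ![![1/4, 1/4 - √3 / 6], ![1/4 + √3 / 6, 1/4]]

noncomputable def gaussLegendre2b : Fin 2 → ℝ := ![1/2, 1/2]

noncomputable def gaussLegendre2c : Fin 2 → ℝ := ![1/2 - √3 / 6, 1/2 + √3 / 6]

theorem gaussLegendre2_symplectic (i j : Fin 2) :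
    gaussLegendre2b i * gaussLegendre2b j
      = gaussLegendre2b i * gaussLegendre2A i j + gaussLegendre2b j * gaussLegendre2A j i := by
  fin_cases i <;> fin_cases j <;>
    simp only [gaussLegendre2A, gaussLegendre2b, of_apply, cons_val', cons_val_zero, cons_val_one,
      cons_val_fin_one, Fin.zero_eta, Fin.mk_one] <;> ring

theorem sum_gaussLegendre2A_row (i : Fin 2) : ∑ j, gaussLegendre2A i j = gaussLegendre2c i := by
  fin_cases i <;>
    simp only [gaussLegendre2A, gaussLegendre2c, Fin.sum_univ_two, of_apply, cons_val', cons_val_zero,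
      cons_val_one, cons_val_fin_one, Fin.zero_eta, Fin.mk_one] <;> ring

theorem sum_gaussLegendre2b : ∑ i, gaussLegendre2b i = 1 := by
  norm_num [gaussLegendre2b, Fin.sum_univ_two]

end GaussLegendre

/-- Exact energy conservation of the two-stage Gauss–Legendre Runge–Kutta–Nyström
method for the linear wave system `M y'' = -K y`. -/
theorem stmt14 (m : ℕ) (M K : Matrix (Fin m) (Fin m) ℝ)
    (hM : M.PosDef) (hK : K.PosSemidef)
    (Δt : ℝ) (yn zn : Fin m → ℝ)
    (A : Matrix (Fin 2) (Fin 2) ℝ)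
    (hA : A = Matrix.of ![![1/4, 1/4 - Real.sqrt 3 / 6], ![1/4 + Real.sqrt 3 / 6, 1/4]])
    (b : Fin 2 → ℝ) (hb : b = ![1/2, 1/2])
    (c : Fin 2 → ℝ) (hc : c = ![1/2 - Real.sqrt 3 / 6, 1/2 + Real.sqrt 3 / 6])
    (κ : Fin 2 → (Fin m → ℝ))
    (hstage : ∀ i, M.mulVec (κ i) =
      -(K.mulVec (yn + (c i * Δt) • zn + (Δt ^ 2) • ∑ j, (A * A) i j • κ j)))
    (ynew znew : Fin m → ℝ)
    (hynew : ynew = yn + Δt • zn + (Δt ^ 2) • ∑ i, (Aᵀ.mulVec b) i • κ i)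
    (hznew : znew = zn + Δt • ∑ i, b i • κ i) :
    (1/2) * (znew ⬝ᵥ M.mulVec znew) + (1/2) * (ynew ⬝ᵥ K.mulVec ynew)
      = (1/2) * (zn ⬝ᵥ M.mulVec zn) + (1/2) * (yn ⬝ᵥ K.mulVec yn) := by
  subst hA hb hc
  have hE := energyForm_rknStep_self (isHermitian_iff_isSymm.mp hM.isHermitian)
    (isHermitian_iff_isSymm.mp hK.isHermitian) gaussLegendre2_symplectic sum_gaussLegendre2A_row
    sum_gaussLegendre2b Δt yn zn κ hstage ynew znew hynew hznew
  rw [energyForm_apply, energyForm_apply] at hE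
  linear_combination hE / 2
end

section
/- If A ∈ ℝ^{s×s} satisfies diag(b)A + Aᵀdiag(b) = b bᵀ (algebraic stability with equality) and Σ b_i = 1, then the derived Nyström coefficients Ā = A², b̄ = Aᵀb satisfy the Runge–Kutta–Nyström symplecticity conditions: b̄_i = b_i(1 − c_i) for all i, and b_i(b̄_j − ā_{ij}) = b_j(b̄_i − ā_{ji}) for all i, j, where c_i = Σ_j a_{ij}. -/
open scoped BigOperators

/-- If `A` satisfies the algebraic-stability identity
`bᵢ aᵢⱼ + bⱼ aⱼᵢ = bᵢ bⱼ` and `∑ bᵢ = 1`, then the derived Nyström coefficients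
`Ā = A²`, `b̄ = Aᵀ b` satisfy the RKN symplecticity conditions
`b̄ᵢ = bᵢ (1 − cᵢ)` and `bᵢ (b̄ⱼ − āᵢⱼ) = bⱼ (b̄ᵢ − āⱼᵢ)`, where `cᵢ = ∑ⱼ aᵢⱼ`. -/
theorem stmt16 (s : ℕ) (A : Matrix (Fin s) (Fin s) ℝ) (b : Fin s → ℝ)
    (hb : ∀ i, b i ≠ 0)
    (hsym : ∀ i j, b i * A i j + b j * A j i = b i * b j)
    (hsum : ∑ i, b i = 1) :
    (∀ i, (∑ j, A j i * b j) = b i * (1 - ∑ j, A i j)) ∧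
    (∀ i j, b i * ((∑ l, A l j * b l) - (A * A) i j)
      = b j * ((∑ l, A l i * b l) - (A * A) j i)) := by
  have key : ∀ i j, b i * ((∑ l, A l j * b l) - (A * A) i j)
      = ∑ l, b l * (A l i * A l j) := by
    intro i j
    rw [Matrix.mul_apply, mul_sub, Finset.mul_sum, Finset.mul_sum,
      ← Finset.sum_sub_distrib]
    refine Finset.sum_congr rfl fun l _ => ?_
    linear_combination (-(A l j)) * hsym i l
  constructor
  · intro i
    have h : ∑ j, A j i * b j = ∑ j, (b i * b j - b i * A i j) := by
      refine Finset.sum_congr rfl fun j _ => ?_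
      linear_combination hsym i j
    rw [h, Finset.sum_sub_distrib, ← Finset.mul_sum, ← Finset.mul_sum, hsum]
    ring
  · intro i j
    rw [key i j, key j i]
    exact Finset.sum_congr rfl fun l _ => by ring
end

section
/- Let M be symmetric positive definite and K symmetric positive semidefinite in ℝ^{m×m}, and consider the central difference scheme M(y^{n+1} − 2yⁿ + y^{n−1}) = −Δt² K yⁿ. If Δt² λ_max < 4, where λ_max is the largest generalized eigenvalue of K x = λ M x, then the discrete energy E^{n+1/2} = ½ ((y^{n+1}−yⁿ)/Δt)ᵀ M ((y^{n+1}−yⁿ)/Δt) + ½ (y^{n+1})ᵀ K yⁿ is conserved: E^{n+1/2} = E^{n−1/2} for all n. -/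
/-! For symmetric `M`, the change of kinetic energy `dₙ₊₁ᵀ M dₙ₊₁ − dₙᵀ M dₙ` (with `dₙ = yⁿ − yⁿ⁻¹`)
factors as `(yⁿ⁺¹ − yⁿ⁻¹)ᵀ M (yⁿ⁺¹ − 2yⁿ + yⁿ⁻¹)`, which the scheme turns into
`−Δt² (yⁿ⁺¹ − yⁿ⁻¹)ᵀ K yⁿ`. For symmetric `K` this is exactly `−Δt²` times the change of the
potential term `(yⁿ⁺¹)ᵀ K yⁿ − (yⁿ)ᵀ K yⁿ⁻¹`. -/

open Matrix

namespace Matrix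

variable {n R : Type*} [Fintype n]

theorem IsSymm.dotProduct_mulVec_comm_s17 [CommSemiring R] {A : Matrix n n R} (hA : A.IsSymm)
    (u v : n → R) : u ⬝ᵥ A *ᵥ v = v ⬝ᵥ A *ᵥ u := by
  rw [← dotProduct_transpose_mulVec, hA.eq]

theorem IsSymm.dotProduct_mulVec_self_sub_self [CommRing R] {A : Matrix n n R} (hA : A.IsSymm)
    (u v : n → R) : u ⬝ᵥ A *ᵥ u - v ⬝ᵥ A *ᵥ v = (u + v) ⬝ᵥ A *ᵥ (u - v) := by
  simp only [mulVec_sub, dotProduct_sub, add_dotProduct, hA.dotProduct_mulVec_comm_s17 v u]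
  ring

end Matrix

section CentralDifference

variable {n 𝕜 : Type*} [Fintype n] [Field 𝕜]

/-- `E^{n+1/2}` with `u = yⁿ`, `v = yⁿ⁺¹`. -/
def centralDifferenceEnergy (M K : Matrix n n 𝕜) (Δt : 𝕜) (u v : n → 𝕜) : 𝕜 :=
  (1/2) * ((Δt⁻¹ • (v - u)) ⬝ᵥ M *ᵥ (Δt⁻¹ • (v - u))) + (1/2) * (v ⬝ᵥ K *ᵥ u)

theorem centralDifferenceEnergy_eq_of_step {M K : Matrix n n 𝕜} (hM : M.IsSymm) (hK : K.IsSymm)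
    {Δt : 𝕜} (hΔt : Δt ≠ 0) {a b c : n → 𝕜}
    (hstep : M *ᵥ (a - (2 : 𝕜) • b + c) = -(Δt ^ 2 • K *ᵥ b)) :
    centralDifferenceEnergy M K Δt b a = centralDifferenceEnergy M K Δt c b := by
  have kinetic : (a - b) ⬝ᵥ M *ᵥ (a - b) - (b - c) ⬝ᵥ M *ᵥ (b - c)
      = -Δt ^ 2 * (a ⬝ᵥ K *ᵥ b - b ⬝ᵥ K *ᵥ c) := by
    rw [hM.dotProduct_mulVec_self_sub_self, show a - b + (b - c) = a - c by abel,
      show a - b - (b - c) = a - (2 : 𝕜) • b + c by module, hstep,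
      hK.dotProduct_mulVec_comm_s17 b c]
    simp only [dotProduct_neg, dotProduct_smul, sub_dotProduct, smul_eq_mul]
    ring
  have hΔt2 : Δt ^ 2 * Δt⁻¹ ^ 2 = 1 := by rw [← mul_pow, mul_inv_cancel₀ hΔt, one_pow]
  unfold centralDifferenceEnergy
  simp only [mulVec_smul, dotProduct_smul, smul_dotProduct, smul_eq_mul]
  linear_combination Δt⁻¹ ^ 2 / 2 * kinetic - (a ⬝ᵥ K *ᵥ b - b ⬝ᵥ K *ᵥ c) / 2 * hΔt2

end CentralDifference

theorem stmt17_general (m : ℕ) (M K : Matrix (Fin m) (Fin m) ℝ)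
    (hM : M.PosDef) (hK : K.PosSemidef)
    (Δt : ℝ) (hΔt : 0 < Δt)
    (y : ℤ → (Fin m → ℝ))
    (hscheme : ∀ n : ℤ,
      M.mulVec (y (n + 1) - (2 : ℝ) • y n + y (n - 1)) = -((Δt ^ 2) • K.mulVec (y n))) :
    ∀ n : ℤ,
      (1/2) * ((Δt⁻¹ • (y (n + 1) - y n)) ⬝ᵥ M.mulVec (Δt⁻¹ • (y (n + 1) - y n)))
        + (1/2) * (y (n + 1) ⬝ᵥ K.mulVec (y n))
      = (1/2) * ((Δt⁻¹ • (y n - y (n - 1))) ⬝ᵥ M.mulVec (Δt⁻¹ • (y n - y (n - 1))))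
        + (1/2) * (y n ⬝ᵥ K.mulVec (y (n - 1))) := fun n =>
  centralDifferenceEnergy_eq_of_step (isHermitian_iff_isSymm.mp hM.isHermitian)
    (isHermitian_iff_isSymm.mp hK.isHermitian) hΔt.ne' (hscheme n)

/-- Conservation of the discrete energy
`E^{n+1/2} = ½ ((yⁿ⁺¹−yⁿ)/Δt)ᵀ M ((yⁿ⁺¹−yⁿ)/Δt) + ½ (yⁿ⁺¹)ᵀ K yⁿ`
for the central difference scheme `M(yⁿ⁺¹ − 2yⁿ + yⁿ⁻¹) = −Δt² K yⁿ`
under the stability condition `Δt² λ_max < 4` on the generalized eigenvalues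
of `K x = λ M x`. -/
theorem stmt17 (m : ℕ) (M K : Matrix (Fin m) (Fin m) ℝ)
    (hM : M.PosDef) (hK : K.PosSemidef)
    (Δt : ℝ) (hΔt : 0 < Δt)
    (y : ℤ → (Fin m → ℝ))
    (hscheme : ∀ n : ℤ,
      M.mulVec (y (n + 1) - (2 : ℝ) • y n + y (n - 1)) = -((Δt ^ 2) • K.mulVec (y n)))
    (hstab : ∀ lam : ℝ, (∃ x : Fin m → ℝ, x ≠ 0 ∧ K.mulVec x = lam • M.mulVec x) →
      Δt ^ 2 * lam < 4) :
    ∀ n : ℤ,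
      (1/2) * ((Δt⁻¹ • (y (n + 1) - y n)) ⬝ᵥ M.mulVec (Δt⁻¹ • (y (n + 1) - y n)))
        + (1/2) * (y (n + 1) ⬝ᵥ K.mulVec (y n))
      = (1/2) * ((Δt⁻¹ • (y n - y (n - 1))) ⬝ᵥ M.mulVec (Δt⁻¹ • (y n - y (n - 1))))
        + (1/2) * (y n ⬝ᵥ K.mulVec (y (n - 1))) :=
  stmt17_general m M K hM hK Δt hΔt y hscheme
end
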